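/- arXiv:2408.15984 — 2 statements merged into one kernel-verified Lean document; each statement's English description precedes it below -/
import Mathlib

section
/- Let A₀, B₀, A₁, B₁ ⊆ ℝ^d be Lebesgue measurable sets of finite measure with A₀ ⊆ B₀ ∩ A₁ and B₀ ⊆ B₁. Then Diss(A₀, A₁) + Diss(B₀, B₁) = Diss(A₀, A₁ ∩ B₁) + Diss(B₀, A₁ ∪ B₁). -/
open MeasureTheory

noncomputable section

/-- `ℝ^d` as Euclidean space. -/
abbrev Rd (d : ℕ) := EuclideanSpace ℝ (Fin d)

/-- Dissipation distance between two sets. -/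
def Diss {d : ℕ} (μp μm : ℝ) (V₀ V₁ : Set (Rd d)) : ℝ :=
  μp * (volume (V₁ \ V₀)).toReal + μm * (volume (V₀ \ V₁)).toReal

theorem stmt_1 {d : ℕ} (hd : 1 ≤ d) (μp μm : ℝ) (hμp : 0 < μp) (hμm : 0 < μm)
    (A₀ B₀ A₁ B₁ : Set (Rd d))
    (hA₀ : MeasurableSet A₀) (hB₀ : MeasurableSet B₀)
    (hA₁ : MeasurableSet A₁) (hB₁ : MeasurableSet B₁)
    (hA₀v : volume A₀ < ⊤) (hB₀v : volume B₀ < ⊤)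
    (hA₁v : volume A₁ < ⊤) (hB₁v : volume B₁ < ⊤)
    (h₁ : A₀ ⊆ B₀ ∩ A₁) (h₂ : B₀ ⊆ B₁) :
    Diss μp μm A₀ A₁ + Diss μp μm B₀ B₁ =
      Diss μp μm A₀ (A₁ ∩ B₁) + Diss μp μm B₀ (A₁ ∪ B₁) := by
  have hAB₀ : A₀ ⊆ B₀ := fun x hx => (h₁ hx).1
  have hA₀A₁ : A₀ ⊆ A₁ := fun x hx => (h₁ hx).2
  have hA₀B₁ : A₀ ⊆ B₁ := fun x hx => h₂ (hAB₀ hx)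
  have e1 : A₀ \ A₁ = ∅ := Set.diff_eq_empty.mpr hA₀A₁
  have e2 : A₀ \ (A₁ ∩ B₁) = ∅ :=
    Set.diff_eq_empty.mpr (fun x hx => ⟨hA₀A₁ hx, hA₀B₁ hx⟩)
  have e3 : B₀ \ B₁ = ∅ := Set.diff_eq_empty.mpr h₂
  have e4 : B₀ \ (A₁ ∪ B₁) = ∅ :=
    Set.diff_eq_empty.mpr (fun x hx => Or.inr (h₂ hx))
  have s1 : A₁ \ A₀ = ((A₁ ∩ B₁) \ A₀) ∪ (A₁ \ B₁) := by
    ext x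
    constructor
    · rintro ⟨hA, hn⟩
      by_cases hB : x ∈ B₁
      · exact Or.inl ⟨⟨hA, hB⟩, hn⟩
      · exact Or.inr ⟨hA, hB⟩
    · rintro (⟨⟨h, _⟩, hn⟩ | ⟨h, hn⟩)
      · exact ⟨h, hn⟩
      · exact ⟨h, fun c => hn (hA₀B₁ c)⟩
  have s2 : (A₁ ∪ B₁) \ B₀ = (B₁ \ B₀) ∪ (A₁ \ B₁) := by
    ext x
    constructor
    · rintro ⟨hA, hn⟩
      by_cases hB : x ∈ B₁
      · exact Or.inl ⟨hB, hn⟩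
      · exact Or.inr ⟨hA.resolve_right hB, hB⟩
    · rintro (⟨h, hn⟩ | ⟨h, hn⟩)
      · exact ⟨Or.inr h, hn⟩
      · exact ⟨Or.inl h, fun c => hn (h₂ c)⟩
  have hdisj1 : Disjoint ((A₁ ∩ B₁) \ A₀) (A₁ \ B₁) := by
    rw [Set.disjoint_left]
    rintro x ⟨⟨_, hB⟩, _⟩ ⟨_, hnB⟩
    exact hnB hB
  have hdisj2 : Disjoint (B₁ \ B₀) (A₁ \ B₁) := by
    rw [Set.disjoint_left]
    rintro x ⟨hB, _⟩ ⟨_, hnB⟩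
    exact hnB hB
  have m1 : volume (A₁ \ A₀) = volume ((A₁ ∩ B₁) \ A₀) + volume (A₁ \ B₁) := by
    rw [s1, measure_union hdisj1 (hA₁.diff hB₁)]
  have m2 : volume ((A₁ ∪ B₁) \ B₀) = volume (B₁ \ B₀) + volume (A₁ \ B₁) := by
    rw [s2, measure_union hdisj2 (hA₁.diff hB₁)]
  have f1 : volume ((A₁ ∩ B₁) \ A₀) ≠ ⊤ :=
    ((measure_mono (Set.diff_subset.trans Set.inter_subset_left)).trans_lt hA₁v).ne
  have f2 : volume (A₁ \ B₁) ≠ ⊤ :=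
    ((measure_mono Set.diff_subset).trans_lt hA₁v).ne
  have f3 : volume (B₁ \ B₀) ≠ ⊤ :=
    ((measure_mono Set.diff_subset).trans_lt hB₁v).ne
  simp only [Diss, e1, e2, e3, e4, measure_empty, ENNReal.toReal_zero, mul_zero,
    add_zero, m1, m2, ENNReal.toReal_add f1 f2, ENNReal.toReal_add f3 f2]
  ring
end
end

section
/- Let X be a real normed vector space, let u, v : X → ℝ be differentiable at a point x ∈ X, and suppose that either u(x) ≠ v(x) or fderiv ℝ u x = fderiv ℝ v x. Then the pointwise maximum u ⊔ v and pointwise minimum u ⊓ v are differentiable at x, and either (fderiv ℝ (u ⊔ v) x = fderiv ℝ u x and fderiv ℝ (u ⊓ v) x = fderiv ℝ v x) or (fderiv ℝ (u ⊔ v) x = fderiv ℝ v x and fderiv ℝ (u ⊓ v) x = fderiv ℝ u x). In particular, ‖fderiv ℝ (u ⊔ v) x‖² + ‖fderiv ℝ (u ⊓ v) x‖² = ‖fderiv ℝ u x‖² + ‖fderiv ℝ v x‖². -/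
open Filter Asymptotics

lemma hasFDerivAt_max_aux {X : Type*} [NormedAddCommGroup X] [NormedSpace ℝ X]
    {u v : X → ℝ} {x : X} {f : X →L[ℝ] ℝ} (hx : u x = v x)
    (hu : HasFDerivAt u f x) (hv : HasFDerivAt v f x) :
    HasFDerivAt (fun y => max (u y) (v y)) f x := by
  have hu' := hu.isLittleO
  have hv' := hv.isLittleO
  have key : ∀ y, ‖max (u y) (v y) - max (u x) (v x) - f (y - x)‖ ≤
      ‖(‖u y - u x - f (y - x)‖ + ‖v y - v x - f (y - x)‖)‖ := by
    intro y
    have hmx : max (u x) (v x) = u x := by rw [hx, max_self]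
    have hnn : (0:ℝ) ≤ ‖u y - u x - f (y - x)‖ + ‖v y - v x - f (y - x)‖ :=
      add_nonneg (norm_nonneg _) (norm_nonneg _)
    rw [Real.norm_of_nonneg hnn]
    rcases le_total (u y) (v y) with h1 | h1
    · rw [max_eq_right h1, hmx, hx]
      exact le_add_of_nonneg_left (norm_nonneg _)
    · rw [max_eq_left h1, hmx]
      exact le_add_of_nonneg_right (norm_nonneg _)
  exact .of_isLittleO <|
    (isBigO_of_le _ key).trans_isLittleO (hu'.norm_left.add hv'.norm_left)

lemma hasFDerivAt_min_aux {X : Type*} [NormedAddCommGroup X] [NormedSpace ℝ X]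
    {u v : X → ℝ} {x : X} {f : X →L[ℝ] ℝ} (hx : u x = v x)
    (hu : HasFDerivAt u f x) (hv : HasFDerivAt v f x) :
    HasFDerivAt (fun y => min (u y) (v y)) f x := by
  have h1 := hasFDerivAt_max_aux (u := fun y => -u y) (v := fun y => -v y)
    (f := -f) (by simp [hx]) hu.neg hv.neg
  have h2 := h1.neg
  simp only [neg_neg] at h2
  have : (fun y => -max (-u y) (-v y)) = fun y => min (u y) (v y) := by
    funext y; rw [← min_neg_neg, neg_neg, neg_neg]
  rw [← this]; exact h2

theorem stmt_6 {X : Type*} [NormedAddCommGroup X] [NormedSpace ℝ X]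
    (u v : X → ℝ) (x : X)
    (hu : DifferentiableAt ℝ u x) (hv : DifferentiableAt ℝ v x)
    (h : u x ≠ v x ∨ fderiv ℝ u x = fderiv ℝ v x) :
    DifferentiableAt ℝ (u ⊔ v) x ∧ DifferentiableAt ℝ (u ⊓ v) x ∧
    ((fderiv ℝ (u ⊔ v) x = fderiv ℝ u x ∧ fderiv ℝ (u ⊓ v) x = fderiv ℝ v x) ∨
      (fderiv ℝ (u ⊔ v) x = fderiv ℝ v x ∧ fderiv ℝ (u ⊓ v) x = fderiv ℝ u x)) ∧
    ‖fderiv ℝ (u ⊔ v) x‖ ^ 2 + ‖fderiv ℝ (u ⊓ v) x‖ ^ 2 =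
      ‖fderiv ℝ u x‖ ^ 2 + ‖fderiv ℝ v x‖ ^ 2 := by
  have main : DifferentiableAt ℝ (u ⊔ v) x ∧ DifferentiableAt ℝ (u ⊓ v) x ∧
      ((fderiv ℝ (u ⊔ v) x = fderiv ℝ u x ∧ fderiv ℝ (u ⊓ v) x = fderiv ℝ v x) ∨
      (fderiv ℝ (u ⊔ v) x = fderiv ℝ v x ∧ fderiv ℝ (u ⊓ v) x = fderiv ℝ u x)) := by
    rcases eq_or_ne (u x) (v x) with heq | hne
    · have hf : fderiv ℝ u x = fderiv ℝ v x := by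
        rcases h with h | h
        · exact absurd heq h
        · exact h
      have hmax := hasFDerivAt_max_aux heq hu.hasFDerivAt
        (hf ▸ hv.hasFDerivAt)
      have hmin := hasFDerivAt_min_aux heq hu.hasFDerivAt
        (hf ▸ hv.hasFDerivAt)
      have hmax' : HasFDerivAt (u ⊔ v) (fderiv ℝ u x) x := hmax
      have hmin' : HasFDerivAt (u ⊓ v) (fderiv ℝ u x) x := hmin
      exact ⟨hmax'.differentiableAt, hmin'.differentiableAt,
        Or.inl ⟨hmax'.fderiv, hmin'.fderiv.trans hf⟩⟩
    · rcases lt_or_gt_of_ne hne with hlt | hlt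
      · have hev : ∀ᶠ y in nhds x, u y < v y :=
          (hu.continuousAt.eventually_lt hv.continuousAt hlt)
        have hsup : (u ⊔ v) =ᶠ[nhds x] v := hev.mono fun y hy => max_eq_right hy.le
        have hinf : (u ⊓ v) =ᶠ[nhds x] u := hev.mono fun y hy => min_eq_left hy.le
        exact ⟨hv.congr_of_eventuallyEq hsup, hu.congr_of_eventuallyEq hinf,
          Or.inr ⟨hsup.fderiv_eq, hinf.fderiv_eq⟩⟩
      · have hev : ∀ᶠ y in nhds x, v y < u y :=
          (hv.continuousAt.eventually_lt hu.continuousAt hlt)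
        have hsup : (u ⊔ v) =ᶠ[nhds x] u := hev.mono fun y hy => max_eq_left hy.le
        have hinf : (u ⊓ v) =ᶠ[nhds x] v := hev.mono fun y hy => min_eq_right hy.le
        exact ⟨hu.congr_of_eventuallyEq hsup, hv.congr_of_eventuallyEq hinf,
          Or.inl ⟨hsup.fderiv_eq, hinf.fderiv_eq⟩⟩
  refine ⟨main.1, main.2.1, main.2.2, ?_⟩
  rcases main.2.2 with ⟨h1, h2⟩ | ⟨h1, h2⟩ <;> rw [h1, h2] <;> ring
end
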